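/- arXiv:2511.18366 — 2 statements merged into one kernel-verified Lean document; each statement's English description precedes it below -/
import Mathlib

section
/- With g the noncommutative Lagrange series and h = 1 − g^{-1}, the operator S_1^{-1} satisfies the twisted Leibniz rule (uv)S_1^{-1} = u·(vS_1^{-1}) + (uS_1^{-1})·v_0 where v_0 is the constant term of v. Consequently, setting η = h S_1^{-1} and γ = g S_1^{-1}, one has γ = g·η, hence η = g^{-1}γ and η(σ_1 − 1) = h. -/
noncomputable section

/-- The free associative algebra over `ℚ` on the noncommuting generators `S_1, S_2, …`
(the letter `n` stands for `S_n`; the letter `0` is never used). -/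
abbrev NSym : Type := FreeAlgebra ℚ ℕ

/-- The series `S_n t^n` (with `S_0 = 1`), so that the completed algebra of noncommutative
symmetric functions graded by `deg S_n = n` is modelled by power series whose `n`-th
coefficient is the degree-`n` component. -/
def S (n : ℕ) : PowerSeries NSym :=
  if n = 0 then 1 else PowerSeries.monomial (R := NSym) n (FreeAlgebra.ι ℚ n)

/-- The identification of the free algebra with the monoid algebra of the free monoid,
giving access to the basis of words `S^I = S_{i_1} ⋯ S_{i_r}`. -/
def toMA : NSym ≃ₐ[ℚ] MonoidAlgebra ℚ (FreeMonoid ℕ) :=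
  FreeAlgebra.equivMonoidAlgebraFreeMonoid

/-- The coefficient of the word `S^I` in an element of the free algebra. -/
def wcoeff (x : NSym) (I : List ℕ) : ℚ := (toMA x).coeff (FreeMonoid.ofList I)

/-- The operator `S_k^{-1}`: it sends the word `S^{i_1 ⋯ i_r}` to `S^{i_1 ⋯ i_{r-1}}` if
`i_r = k`, and to `0` otherwise (in particular scalars are sent to `0`). -/
def Sinv (k : ℕ) (x : NSym) : NSym :=
  toMA.symm (Finsupp.sum (toMA x).coeff fun w c =>
    if (FreeMonoid.toList w).getLast? = some k then
      (MonoidAlgebra.single (FreeMonoid.ofList ((FreeMonoid.toList w).dropLast)) c :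
        MonoidAlgebra ℚ (FreeMonoid ℕ))
    else 0)

/-- `σ_1 = ∑_{n≥0} S_n`. -/
def sigma1 : PowerSeries NSym :=
  PowerSeries.mk fun n => if n = 0 then 1 else FreeAlgebra.ι ℚ n

abbrev MA := MonoidAlgebra ℚ (FreeMonoid ℕ)

def LS (k : ℕ) : MA →ₗ[ℚ] MA :=
  (Finsupp.lsum ℚ fun w =>
    if (FreeMonoid.toList w).getLast? = some k then
      (MonoidAlgebra.lsingle (FreeMonoid.ofList ((FreeMonoid.toList w).dropLast)) : ℚ →ₗ[ℚ] MA)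
    else 0) ∘ₗ (MonoidAlgebra.coeffLinearEquiv ℚ).toLinearMap

lemma Sinv_eq (k : ℕ) (x : NSym) : Sinv k x = toMA.symm (LS k (toMA x)) := by
  unfold Sinv LS
  congr 1
  rw [LinearMap.comp_apply]
  refine (Finsupp.sum_congr fun w _ => ?_).trans (Finsupp.lsum_apply _ _ _).symm
  split <;> simp

lemma LS_single (k : ℕ) (w : FreeMonoid ℕ) (c : ℚ) :
    LS k (MonoidAlgebra.single w c) =
      if (FreeMonoid.toList w).getLast? = some k then
        MonoidAlgebra.single (FreeMonoid.ofList ((FreeMonoid.toList w).dropLast)) c else 0 := by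
  have hc : (MonoidAlgebra.coeffLinearEquiv ℚ) (MonoidAlgebra.single w c : MA) = Finsupp.single w c := rfl
  unfold LS
  rw [LinearMap.comp_apply, LinearEquiv.coe_coe, hc]
  refine (Finsupp.lsum_single _ _ _ _).trans ?_
  split <;> simp

lemma toList_eq_nil_iff (w : FreeMonoid ℕ) : FreeMonoid.toList w = [] ↔ w = 1 := by
  constructor
  · intro h; exact FreeMonoid.toList.injective (by simpa using h)
  · rintro rfl; rfl

lemma LS_leibniz (k : ℕ) (a b : MA) : LS k (a * b) = a * LS k b + (b.coeff 1) • LS k a := by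
  classical
  induction b using MonoidAlgebra.induction_linear with
  | zero => simp
  | add f g hf hg =>
    rw [mul_add, map_add, hf, hg]
    simp only [MonoidAlgebra.coeff_add, Finsupp.add_apply, map_add, mul_add, add_smul]
    abel
  | single w' c' =>
    rcases eq_or_ne w' 1 with rfl | hw'
    · have h1 : (MonoidAlgebra.single (1 : FreeMonoid ℕ) c') = c' • (1 : MA) := by
        simp [MonoidAlgebra.one_def, MonoidAlgebra.smul_single]
      have h2 : LS k (MonoidAlgebra.single (1 : FreeMonoid ℕ) c') = 0 := by
        rw [LS_single]; simp
      rw [h2, mul_zero, zero_add, MonoidAlgebra.coeff_single, Finsupp.single_apply, if_pos rfl, h1, mul_smul_comm,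
        map_smul, mul_one]
    · induction a using MonoidAlgebra.induction_linear with
      | zero => simp
      | add f g hf hg =>
        rw [add_mul, map_add, hf, hg, map_add]
        simp only [add_mul, smul_add]
        abel
      | single w c =>
        rw [MonoidAlgebra.single_mul_single, LS_single, LS_single, LS_single]
        have hml : FreeMonoid.toList (w * w') = FreeMonoid.toList w ++ FreeMonoid.toList w' := rfl
        have hnil : FreeMonoid.toList w' ≠ [] := fun h => hw' ((toList_eq_nil_iff w').mp h)
        have hlast : (FreeMonoid.toList (w * w')).getLast? = (FreeMonoid.toList w').getLast? := by
          rw [hml, List.getLast?_append]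
          cases h : (FreeMonoid.toList w').getLast? with
          | none => exact absurd (List.getLast?_eq_none_iff.mp h) hnil
          | some x => rfl
        have hsing : (MonoidAlgebra.single w' c' : MA).coeff 1 = 0 := by
          rw [MonoidAlgebra.coeff_single, Finsupp.single_apply, if_neg hw']
        rw [hsing, zero_smul, add_zero, hlast]
        split
        · rw [hml, List.dropLast_append_of_ne_nil hnil]
          have h3 : FreeMonoid.ofList (FreeMonoid.toList w ++ (FreeMonoid.toList w').dropLast)
              = w * FreeMonoid.ofList ((FreeMonoid.toList w').dropLast) := rfl
          rw [h3]
          exact (MonoidAlgebra.single_mul_single _ _ _ _).symm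
        · simp

def SinvL (k : ℕ) : NSym →ₗ[ℚ] NSym :=
  toMA.symm.toLinearMap ∘ₗ (LS k) ∘ₗ toMA.toLinearMap

lemma Sinv_eq' (k : ℕ) (x : NSym) : Sinv k x = SinvL k x := Sinv_eq k x

lemma Sinv_zero (k : ℕ) : Sinv k 0 = 0 := by rw [Sinv_eq']; exact map_zero _

lemma Sinv_sum {ι : Type*} (k : ℕ) (s : Finset ι) (f : ι → NSym) :
    Sinv k (∑ i ∈ s, f i) = ∑ i ∈ s, Sinv k (f i) := by
  simp only [Sinv_eq']; exact map_sum _ _ _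

lemma Sinv_neg (k : ℕ) (x : NSym) : Sinv k (-x) = -Sinv k x := by
  simp only [Sinv_eq']; exact map_neg _ _

lemma Sinv_leibniz (k : ℕ) (u v : NSym) :
    Sinv k (u * v) = u * Sinv k v + ((toMA v).coeff (1 : FreeMonoid ℕ)) • Sinv k u := by
  simp only [Sinv_eq]
  rw [map_mul, LS_leibniz, map_add, map_smul, map_mul, AlgEquiv.symm_apply_apply]

lemma Sinv_one (k : ℕ) : Sinv k 1 = 0 := by
  rw [Sinv_eq, map_one, MonoidAlgebra.one_def, LS_single]
  simp

lemma toMA_iota (n : ℕ) :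
    toMA (FreeAlgebra.ι ℚ n) = MonoidAlgebra.single (FreeMonoid.of n) 1 := by
  simp [toMA, FreeAlgebra.equivMonoidAlgebraFreeMonoid, MonoidAlgebra.of_apply]

lemma Sinv_iota (k n : ℕ) :
    Sinv k (FreeAlgebra.ι ℚ n) = if n = k then 1 else 0 := by
  rw [Sinv_eq, toMA_iota, LS_single]
  have : FreeMonoid.toList (FreeMonoid.of n) = [n] := rfl
  rw [this]
  simp only [List.getLast?_singleton, List.dropLast_singleton]
  split
  · rename_i h
    rw [if_pos (Option.some_inj.mp h)]
    have : (MonoidAlgebra.single (FreeMonoid.ofList []) 1 : MA) = (1 : MonoidAlgebra ℚ (FreeMonoid ℕ)) := by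
      rw [MonoidAlgebra.one_def]; rfl
    rw [this, map_one]
  · rename_i h
    rw [if_neg (fun hnk => h (by rw [hnk]))]
    simp

/-- Homogeneity of degree `m`, with all letters nonzero. -/
def Hgr (m : ℕ) (x : NSym) : Prop :=
  ∀ w ∈ (toMA x).coeff.support,
    (FreeMonoid.toList w).sum = m ∧ ∀ a ∈ FreeMonoid.toList w, a ≠ 0

lemma Hgr_zero (m : ℕ) : Hgr m 0 := by intro w hw; rw [map_zero] at hw; simp at hw

lemma Hgr_one : Hgr 0 1 := by
  intro w hw
  rw [map_one, MonoidAlgebra.one_def, MonoidAlgebra.coeff_single] at hw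
  have := Finsupp.support_single_subset hw
  simp only [Finset.mem_singleton] at this
  subst this
  exact ⟨rfl, by intro a ha; exact absurd ha List.not_mem_nil⟩

lemma Hgr_add {m : ℕ} {x y : NSym} (hx : Hgr m x) (hy : Hgr m y) : Hgr m (x + y) := by
  classical
  intro w hw
  rw [map_add, MonoidAlgebra.coeff_add] at hw
  rcases Finset.mem_union.mp (Finsupp.support_add hw) with h | h
  · exact hx w h
  · exact hy w h

lemma Hgr_neg {m : ℕ} {x : NSym} (hx : Hgr m x) : Hgr m (-x) := by
  intro w hw
  rw [map_neg, MonoidAlgebra.coeff_neg, Finsupp.support_neg] at hw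
  exact hx w hw

lemma Hgr_sum {ι : Type*} {m : ℕ} (s : Finset ι) (f : ι → NSym)
    (hf : ∀ i ∈ s, Hgr m (f i)) : Hgr m (∑ i ∈ s, f i) := by
  classical
  induction s using Finset.induction_on with
  | empty => simpa using Hgr_zero m
  | insert a s hns ih =>
    rw [Finset.sum_insert hns]
    exact Hgr_add (hf _ (Finset.mem_insert_self _ _))
      (ih fun i hi => hf i (Finset.mem_insert_of_mem hi))

lemma Hgr_mul {m n : ℕ} {x y : NSym} (hx : Hgr m x) (hy : Hgr n y) : Hgr (m + n) (x * y) := by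
  classical
  intro w hw
  rw [map_mul] at hw
  have := MonoidAlgebra.support_coeff_mul_subset (toMA x) (toMA y) hw
  rw [Finset.mem_mul] at this
  obtain ⟨a, ha, b, hb, hab⟩ := this
  obtain ⟨ha1, ha2⟩ := hx a ha
  obtain ⟨hb1, hb2⟩ := hy b hb
  subst hab
  have hl : FreeMonoid.toList (a * b) = FreeMonoid.toList a ++ FreeMonoid.toList b := rfl
  constructor
  · rw [hl, List.sum_append, ha1, hb1]
  · intro c hc
    rw [hl, List.mem_append] at hc
    rcases hc with h | h
    · exact ha2 c h
    · exact hb2 c h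

lemma Hgr_iota {n : ℕ} (hn : n ≠ 0) : Hgr n (FreeAlgebra.ι ℚ n) := by
  intro w hw
  rw [toMA_iota, MonoidAlgebra.coeff_single] at hw
  have := Finsupp.support_single_subset hw
  simp only [Finset.mem_singleton] at this
  subst this
  have hl : FreeMonoid.toList (FreeMonoid.of n) = [n] := rfl
  rw [hl]
  refine ⟨by simp, ?_⟩
  intro a ha
  have : a = n := by simpa using ha
  subst this; exact hn

lemma toMA_one_apply : (toMA (1 : NSym)).coeff (1 : FreeMonoid ℕ) = 1 := by
  have h1 : toMA (1 : NSym) = 1 := map_one _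
  rw [h1, MonoidAlgebra.one_def, MonoidAlgebra.coeff_single]
  classical
  rw [Finsupp.single_apply, if_pos rfl]

lemma Hgr_eps {m : ℕ} {x : NSym} (hx : Hgr m x) (hm : m ≠ 0) :
    (toMA x).coeff (1 : FreeMonoid ℕ) = 0 := by
  by_contra h
  have hw : (1 : FreeMonoid ℕ) ∈ (toMA x).coeff.support := Finsupp.mem_support_iff.mpr h
  have := (hx 1 hw).1
  simp only [FreeMonoid.toList_one, List.sum_nil] at this
  exact hm this.symm

lemma Sinv_eq_zero_of_Hgr {j k : ℕ} {x : NSym} (hx : Hgr j x) (hjk : j < k) :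
    Sinv k x = 0 := by
  unfold Sinv
  rw [Finsupp.sum]
  rw [Finset.sum_eq_zero, map_zero]
  intro w hw
  obtain ⟨h1, h2⟩ := hx w hw
  rw [if_neg]
  intro hlast
  have hk : k ∈ FreeMonoid.toList w := List.mem_of_getLast? hlast
  have : k ≤ (FreeMonoid.toList w).sum := List.le_sum_of_mem hk
  omega

lemma resolution_MA (m : ℕ) (hm : 1 ≤ m) (a : MA)
    (ha : ∀ w ∈ a.coeff.support,
      (FreeMonoid.toList w).sum = m ∧ ∀ c ∈ FreeMonoid.toList w, c ≠ 0) :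
    ∑ n ∈ Finset.Icc 1 m,
      LS n a * (MonoidAlgebra.of ℚ (FreeMonoid ℕ) (FreeMonoid.of n)) = a := by
  classical
  induction a using MonoidAlgebra.induction with
  | zero => simp
  | single_add w c f hw hc ih =>
    have hsupp : (MonoidAlgebra.single w c + f).coeff.support = insert w f.coeff.support := by
      rw [MonoidAlgebra.coeff_add, MonoidAlgebra.coeff_single, Finsupp.support_add_eq, Finsupp.support_single_ne_zero _ hc]
      · rfl
      · rw [Finsupp.support_single_ne_zero _ hc]
        simpa using hw
    have hwmem : w ∈ (MonoidAlgebra.single w c + f).coeff.support := by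
      rw [hsupp]; exact Finset.mem_insert_self _ _
    obtain ⟨hsum, hlet⟩ := ha w hwmem
    have hf : ∀ w' ∈ f.coeff.support,
        (FreeMonoid.toList w').sum = m ∧ ∀ c ∈ FreeMonoid.toList w', c ≠ 0 := by
      intro w' hw'
      exact ha w' (by rw [hsupp]; exact Finset.mem_insert_of_mem hw')
    have key : ∑ n ∈ Finset.Icc 1 m,
        LS n (MonoidAlgebra.single w c) *
          (MonoidAlgebra.of ℚ (FreeMonoid ℕ) (FreeMonoid.of n)) =
        MonoidAlgebra.single w c := by
      have hnil : FreeMonoid.toList w ≠ [] := by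
        intro h
        rw [h] at hsum
        simp at hsum; omega
      set l := FreeMonoid.toList w with hl
      have hlast : l.getLast? = some (l.getLast hnil) := List.getLast?_eq_getLast hnil
      set n0 := l.getLast hnil with hn0
      have hn0mem : n0 ∈ l := List.getLast_mem hnil
      have hn0Icc : n0 ∈ Finset.Icc 1 m := by
        rw [Finset.mem_Icc]
        exact ⟨Nat.one_le_iff_ne_zero.mpr (hlet n0 hn0mem), hsum ▸ List.le_sum_of_mem hn0mem⟩
      refine (Finset.sum_eq_single n0 ?_ ?_).trans ?_
      · intro b _ hb
        rw [LS_single, if_neg, zero_mul]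
        rw [← hl, hlast]
        exact fun h => hb (Option.some_inj.mp h).symm
      · intro h
        exact absurd hn0Icc h
      · rw [LS_single, if_pos (by rw [← hl, hlast]), MonoidAlgebra.of_apply,
          MonoidAlgebra.single_mul_single, mul_one]
        congr 1
        have h2 : FreeMonoid.ofList (l.dropLast) * FreeMonoid.of n0 =
            FreeMonoid.ofList (l.dropLast ++ [n0]) := rfl
        rw [h2, List.dropLast_concat_getLast hnil]
        exact FreeMonoid.toList.injective rfl
    calc ∑ n ∈ Finset.Icc 1 m, LS n (MonoidAlgebra.single w c + f) *
            (MonoidAlgebra.of ℚ (FreeMonoid ℕ) (FreeMonoid.of n))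
        = ∑ n ∈ Finset.Icc 1 m,
            (LS n (MonoidAlgebra.single w c) *
              (MonoidAlgebra.of ℚ (FreeMonoid ℕ) (FreeMonoid.of n)) +
             LS n f *
              (MonoidAlgebra.of ℚ (FreeMonoid ℕ) (FreeMonoid.of n))) := by
          refine Finset.sum_congr rfl fun n _ => ?_
          rw [map_add, add_mul]
      _ = MonoidAlgebra.single w c + f := by
          rw [Finset.sum_add_distrib, key, ih hf]

lemma resolution (m : ℕ) (hm : 1 ≤ m) (x : NSym) (hx : Hgr m x) :
    ∑ n ∈ Finset.Icc 1 m, Sinv n x * FreeAlgebra.ι ℚ n = x := by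
  apply toMA.injective
  rw [map_sum]
  calc ∑ n ∈ Finset.Icc 1 m, toMA (Sinv n x * FreeAlgebra.ι ℚ n)
      = ∑ n ∈ Finset.Icc 1 m,
          LS n (toMA x) * (MonoidAlgebra.of ℚ (FreeMonoid ℕ) (FreeMonoid.of n)) := by
        refine Finset.sum_congr rfl fun n _ => ?_
        rw [map_mul, Sinv_eq, AlgEquiv.apply_symm_apply, toMA_iota, MonoidAlgebra.of_apply]
    _ = toMA x := resolution_MA m hm (toMA x) hx

open PowerSeries in
lemma coeff_S_mul {n : ℕ} (m : ℕ) (hn : n ≠ 0) (f : PowerSeries NSym) :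
    coeff (R := NSym) m (S n * f) =
      if n ≤ m then FreeAlgebra.ι ℚ n * coeff (R := NSym) (m - n) f else 0 := by
  classical
  rw [S, if_neg hn, coeff_mul]
  by_cases hnm : n ≤ m
  · rw [if_pos hnm]
    rw [Finset.sum_eq_single (n, m - n)]
    · rw [coeff_monomial, if_pos rfl]
    · rintro ⟨a, b⟩ hab hne
      rw [Finset.HasAntidiagonal.mem_antidiagonal] at hab
      rw [coeff_monomial]
      rcases eq_or_ne a n with rfl | ha
      · exact absurd (by simp; omega) hne
      · rw [if_neg ha, zero_mul]
    · intro h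
      exact absurd (Finset.HasAntidiagonal.mem_antidiagonal.mpr (by omega)) h
  · rw [if_neg hnm]
    refine Finset.sum_eq_zero fun p hp => ?_
    rw [Finset.HasAntidiagonal.mem_antidiagonal] at hp
    rw [coeff_monomial, if_neg (by omega), zero_mul]

open PowerSeries

section Series

variable {g ginv γ : PowerSeries NSym}

variable (hg : ∀ m : ℕ, PowerSeries.coeff (R := NSym) m g =
      ∑ n ∈ Finset.range (m + 1), PowerSeries.coeff (R := NSym) m (S n * g ^ n))

include hg

lemma g_zero : coeff (R := NSym) 0 g = 1 := by
  have := hg 0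
  rw [Finset.range_one, Finset.sum_singleton] at this
  rw [this, S, if_pos rfl, pow_zero, mul_one, coeff_one, if_pos rfl]

lemma g_rec (m : ℕ) (hm : 1 ≤ m) :
    coeff (R := NSym) m g =
      ∑ i ∈ Finset.range m, FreeAlgebra.ι ℚ (i + 1) * coeff (R := NSym) (m - (i + 1)) (g ^ (i + 1)) := by
  rw [hg m, Finset.sum_range_succ']
  have h0 : coeff (R := NSym) m (S 0 * g ^ 0) = 0 := by
    rw [S, if_pos rfl, pow_zero, mul_one, coeff_one, if_neg (by omega)]
  rw [h0, add_zero]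
  refine Finset.sum_congr rfl fun i hi => ?_
  rw [Finset.mem_range] at hi
  rw [coeff_S_mul m (by omega), if_pos (by omega)]

lemma Hgr_pow_of (M : ℕ) (hM : ∀ j, j ≤ M → Hgr j (coeff (R := NSym) j g)) :
    ∀ k j, j ≤ M → Hgr j (coeff (R := NSym) j (g ^ k)) := by
  intro k
  induction k with
  | zero =>
    intro j _
    rw [pow_zero, coeff_one]
    split
    · rename_i h; rw [h]; exact Hgr_one
    · exact Hgr_zero j
  | succ k ih =>
    intro j hj
    rw [pow_succ, coeff_mul]
    refine Hgr_sum _ _ fun p hp => ?_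
    rw [Finset.HasAntidiagonal.mem_antidiagonal] at hp
    have := Hgr_mul (ih p.1 (by omega)) (hM p.2 (by omega))
    rwa [hp] at this

lemma Hgr_g : ∀ m, Hgr m (coeff (R := NSym) m g) := by
  intro m
  induction m using Nat.strong_induction_on with
  | _ m IH =>
    rcases Nat.eq_zero_or_pos m with rfl | hm
    · rw [g_zero hg]; exact Hgr_one
    · rw [g_rec hg m hm]
      refine Hgr_sum _ _ fun i hi => ?_
      rw [Finset.mem_range] at hi
      have h1 := Hgr_iota (n := i + 1) (by omega)
      have h2 := Hgr_pow_of hg (m - 1) (fun j hj => IH j (by omega)) (i + 1)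
        (m - (i + 1)) (by omega)
      have := Hgr_mul h1 h2
      rwa [show i + 1 + (m - (i + 1)) = m by omega] at this

lemma Hgr_gpow : ∀ k m, Hgr m (coeff (R := NSym) m (g ^ k)) := fun k m =>
  Hgr_pow_of hg m (fun j _ => Hgr_g hg j) k m le_rfl

lemma gpow_zero_coeff (k : ℕ) : coeff (R := NSym) 0 (g ^ k) = 1 := by
  rw [coeff_zero_eq_constantCoeff_apply, map_pow]
  rw [← coeff_zero_eq_constantCoeff_apply, g_zero hg, one_pow]

lemma eps_gpow (k j : ℕ) :
    (toMA (coeff (R := NSym) j (g ^ k))).coeff (1 : FreeMonoid ℕ) = if j = 0 then 1 else 0 := by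
  split
  · rename_i h; rw [h, gpow_zero_coeff hg, toMA_one_apply]
  · rename_i h; exact Hgr_eps (Hgr_gpow hg k j) h

lemma eps_g (j : ℕ) : (toMA (coeff (R := NSym) j g)).coeff (1 : FreeMonoid ℕ) = if j = 0 then 1 else 0 := by
  have := eps_gpow hg 1 j
  rwa [pow_one] at this

end Series

section Series2

variable {g ginv γ η : PowerSeries NSym}

variable (hg : ∀ m : ℕ, PowerSeries.coeff (R := NSym) m g =
      ∑ n ∈ Finset.range (m + 1), PowerSeries.coeff (R := NSym) m (S n * g ^ n))

include hg

lemma LLI : ∀ s k n, 1 ≤ n →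
    Sinv n (coeff (R := NSym) (s + n) (g ^ k)) = Sinv 1 (coeff (R := NSym) (s + 1) (g ^ k)) := by
  intro s
  induction s using Nat.strong_induction_on with
  | _ s IH =>
    have claimG : ∀ n, 1 ≤ n → Sinv n (coeff (R := NSym) (s + n) g) =
        (if s = 0 then 1 else 0) +
          ∑ t ∈ Finset.range s,
            FreeAlgebra.ι ℚ (t + 1) * Sinv 1 (coeff (R := NSym) (s - t) (g ^ (t + 1))) := by
      intro n hn
      rw [g_rec hg (s + n) (by omega), Sinv_sum, Finset.range_eq_Ico,
        ← Finset.sum_Ico_consecutive _ (Nat.zero_le s) (by omega : s ≤ s + n)]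
      have hA : ∑ i ∈ Finset.Ico 0 s,
          Sinv n (FreeAlgebra.ι ℚ (i + 1) * coeff (R := NSym) (s + n - (i + 1)) (g ^ (i + 1)))
          = ∑ t ∈ Finset.range s,
            FreeAlgebra.ι ℚ (t + 1) * Sinv 1 (coeff (R := NSym) (s - t) (g ^ (t + 1))) := by
        rw [← Finset.range_eq_Ico]
        refine Finset.sum_congr rfl fun i hi => ?_
        rw [Finset.mem_range] at hi
        rw [Sinv_leibniz]
        have e1 : s + n - (i + 1) = (s - (i + 1)) + n := by omega
        rw [e1, eps_gpow hg, if_neg (show ¬((s - (i+1)) + n = 0) by omega), zero_smul, add_zero,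
          IH (s - (i + 1)) (by omega) (i + 1) n hn,
          show s - (i + 1) + 1 = s - i by omega]
      have hB : ∑ i ∈ Finset.Ico s (s + n),
          Sinv n (FreeAlgebra.ι ℚ (i + 1) * coeff (R := NSym) (s + n - (i + 1)) (g ^ (i + 1)))
          = (if s = 0 then 1 else 0) := by
        have hterm : ∀ i ∈ Finset.Ico s (s + n),
            Sinv n (FreeAlgebra.ι ℚ (i + 1) * coeff (R := NSym) (s + n - (i + 1)) (g ^ (i + 1))) =
            (if s + n - (i + 1) = 0 then (1 : ℚ) else 0) •
              (if i + 1 = n then (1 : NSym) else 0) := by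
          intro i hi
          rw [Finset.mem_Ico] at hi
          rw [Sinv_leibniz, Sinv_eq_zero_of_Hgr (Hgr_gpow hg _ _) (by omega), mul_zero, zero_add,
            eps_gpow hg, Sinv_iota]
        rw [Finset.sum_congr rfl hterm]
        rcases eq_or_ne s 0 with rfl | hs
        · rw [if_pos rfl, Finset.sum_eq_single (n - 1)]
          · rw [if_pos (by omega), if_pos (by omega), one_smul]
          · intro b hb hbn
            rw [Finset.mem_Ico] at hb
            rw [if_neg (show ¬(0 + n - (b + 1) = 0) by omega), zero_smul]
          · intro h
            exact absurd (Finset.mem_Ico.mpr ⟨by omega, by omega⟩) h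
        · rw [if_neg hs]
          refine Finset.sum_eq_zero fun i hi => ?_
          rw [Finset.mem_Ico] at hi
          rcases eq_or_ne (i + 1) n with he | he
          · rw [if_neg (show ¬(s + n - (i + 1) = 0) by omega), zero_smul]
          · rw [if_neg he, smul_zero]
      rw [hA, hB, add_comm, Finset.range_eq_Ico]
    have Hg1 : ∀ s', s' ≤ s → ∀ n, 1 ≤ n →
        Sinv n (coeff (R := NSym) (s' + n) g) = Sinv 1 (coeff (R := NSym) (s' + 1) g) := by
      intro s' hs' n hn
      rcases eq_or_lt_of_le hs' with rfl | h
      · rw [claimG n hn, claimG 1 le_rfl]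
      · have h1 := IH s' h 1 n hn
        rwa [pow_one] at h1
    have main : ∀ k n, 1 ≤ n →
        Sinv n (coeff (R := NSym) (s + n) (g ^ k)) = Sinv 1 (coeff (R := NSym) (s + 1) (g ^ k)) := by
      intro k
      induction k with
      | zero =>
        intro n hn
        rw [pow_zero, coeff_one, if_neg (by omega), coeff_one, if_neg (by omega), Sinv_zero, Sinv_zero]
      | succ k ihk =>
        have canon : ∀ n, 1 ≤ n →
            Sinv n (coeff (R := NSym) (s + n) (g ^ (k + 1))) =
              (∑ i ∈ Finset.range (s + 1),
                coeff (R := NSym) i (g ^ k) * Sinv 1 (coeff (R := NSym) (s - i + 1) g)) +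
              Sinv 1 (coeff (R := NSym) (s + 1) (g ^ k)) := by
          intro n hn
          rw [pow_succ, coeff_mul, Finset.Nat.sum_antidiagonal_eq_sum_range_succ_mk, Sinv_sum]
          have hterm : ∀ i ∈ Finset.range (s + n + 1),
              Sinv n (coeff (R := NSym) i (g ^ k) * coeff (R := NSym) (s + n - i) g) =
              coeff (R := NSym) i (g ^ k) * Sinv n (coeff (R := NSym) (s + n - i) g) +
                (if s + n - i = 0 then (1 : ℚ) else 0) • Sinv n (coeff (R := NSym) i (g ^ k)) := by
            intro i _
            rw [Sinv_leibniz, eps_g hg]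
          rw [Finset.sum_congr rfl hterm, Finset.sum_add_distrib]
          have hsecond : ∑ i ∈ Finset.range (s + n + 1),
              (if s + n - i = 0 then (1 : ℚ) else 0) • Sinv n (coeff (R := NSym) i (g ^ k)) =
              Sinv n (coeff (R := NSym) (s + n) (g ^ k)) := by
            rw [Finset.sum_eq_single (s + n)]
            · rw [if_pos (by omega), one_smul]
            · intro b hb hbn
              rw [Finset.mem_range] at hb
              rw [if_neg (show ¬(s + n - b = 0) by omega), zero_smul]
            · intro h
              exact absurd (Finset.mem_range.mpr (by omega)) h
          have hfirst : ∑ i ∈ Finset.range (s + n + 1),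
              coeff (R := NSym) i (g ^ k) * Sinv n (coeff (R := NSym) (s + n - i) g) =
              ∑ i ∈ Finset.range (s + 1),
                coeff (R := NSym) i (g ^ k) * Sinv 1 (coeff (R := NSym) (s - i + 1) g) := by
            rw [Finset.range_eq_Ico,
              ← Finset.sum_Ico_consecutive _ (Nat.zero_le (s + 1)) (by omega : s + 1 ≤ s + n + 1)]
            have h2 : ∑ i ∈ Finset.Ico (s + 1) (s + n + 1),
                coeff (R := NSym) i (g ^ k) * Sinv n (coeff (R := NSym) (s + n - i) g) = 0 :=
              Finset.sum_eq_zero fun i hi => by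
                rw [Finset.mem_Ico] at hi
                rw [Sinv_eq_zero_of_Hgr (Hgr_g hg _) (by omega), mul_zero]
            rw [h2, add_zero, ← Finset.range_eq_Ico]
            refine Finset.sum_congr rfl fun i hi => ?_
            rw [Finset.mem_range] at hi
            rw [show s + n - i = (s - i) + n by omega, Hg1 (s - i) (by omega) n hn,
              show s - i + 1 = s - i + 1 from rfl]
          rw [hfirst, hsecond, ihk n hn]
        intro n hn
        rw [canon n hn, canon 1 le_rfl]
    exact main

lemma ginv_zero (h2 : ginv * g = 1) : coeff (R := NSym) 0 ginv = 1 := by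
  have := congrArg (constantCoeff (R := NSym)) h2
  rw [map_mul, map_one] at this
  rw [coeff_zero_eq_constantCoeff_apply]
  have hgz : constantCoeff (R := NSym) g = 1 := by
    rw [← coeff_zero_eq_constantCoeff_apply, g_zero hg]
  rw [hgz, mul_one] at this
  exact this

lemma h_rec (h2 : ginv * g = 1) (m : ℕ) (hm : 1 ≤ m) :
    coeff (R := NSym) m (1 - ginv) =
      ∑ i ∈ Finset.range m, coeff (R := NSym) i ginv * coeff (R := NSym) (m - i) g := by
  have h0 := congrArg (coeff (R := NSym) m) h2
  rw [coeff_mul, Finset.Nat.sum_antidiagonal_eq_sum_range_succ_mk, Finset.sum_range_succ] at h0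
  have h1 : ∑ i ∈ Finset.range m, coeff (R := NSym) i ginv * coeff (R := NSym) (m - i) g +
      coeff (R := NSym) m ginv * coeff (R := NSym) (m - m) g = coeff (R := NSym) m 1 := h0
  rw [Nat.sub_self, g_zero hg, mul_one, coeff_one, if_neg (by omega)] at h1
  rw [map_sub, coeff_one, if_neg (by omega), zero_sub]
  exact (neg_eq_of_add_eq_zero_left h1)

lemma Hgr_ginv (h2 : ginv * g = 1) : ∀ m, Hgr m (coeff (R := NSym) m ginv) := by
  intro m
  induction m using Nat.strong_induction_on with
  | _ m IH =>
    rcases Nat.eq_zero_or_pos m with rfl | hm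
    · rw [ginv_zero hg h2]; exact Hgr_one
    · have hr := h_rec hg h2 m hm
      rw [map_sub, coeff_one, if_neg (by omega), zero_sub] at hr
      have : coeff (R := NSym) m ginv = -∑ i ∈ Finset.range m, coeff (R := NSym) i ginv * coeff (R := NSym) (m - i) g := by
        rw [← hr, neg_neg]
      rw [this]
      refine Hgr_neg (Hgr_sum _ _ fun i hi => ?_)
      rw [Finset.mem_range] at hi
      have := Hgr_mul (IH i hi) (Hgr_g hg (m - i))
      rwa [show i + (m - i) = m by omega] at this

lemma eta_key (h2 : ginv * g = 1)
    (hγ : ∀ n : ℕ, PowerSeries.coeff (R := NSym) n γ = Sinv 1 (PowerSeries.coeff (R := NSym) (n + 1) g)) :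
    ∀ s n, 1 ≤ n →
      Sinv n (coeff (R := NSym) (s + n) (1 - ginv)) = coeff (R := NSym) s (ginv * γ) := by
  intro s n hn
  rw [h_rec hg h2 (s + n) (by omega), Sinv_sum]
  have hterm : ∀ i ∈ Finset.range (s + n),
      Sinv n (coeff (R := NSym) i ginv * coeff (R := NSym) (s + n - i) g) =
      coeff (R := NSym) i ginv * Sinv n (coeff (R := NSym) (s + n - i) g) := by
    intro i hi
    rw [Finset.mem_range] at hi
    rw [Sinv_leibniz, eps_g hg, if_neg (show ¬(s + n - i = 0) by omega), zero_smul, add_zero]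
  rw [Finset.sum_congr rfl hterm, Finset.range_eq_Ico,
    ← Finset.sum_Ico_consecutive _ (Nat.zero_le (s + 1)) (by omega : s + 1 ≤ s + n)]
  have h3 : ∑ i ∈ Finset.Ico (s + 1) (s + n),
      coeff (R := NSym) i ginv * Sinv n (coeff (R := NSym) (s + n - i) g) = 0 :=
    Finset.sum_eq_zero fun i hi => by
      rw [Finset.mem_Ico] at hi
      rw [Sinv_eq_zero_of_Hgr (Hgr_g hg _) (by omega), mul_zero]
  rw [h3, add_zero, coeff_mul, Finset.Nat.sum_antidiagonal_eq_sum_range_succ_mk,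
    Finset.range_eq_Ico]
  refine Finset.sum_congr rfl fun i hi => ?_
  rw [Finset.mem_Ico] at hi
  have hLLI := LLI hg (s - i) 1 n hn
  rw [pow_one] at hLLI
  rw [show s + n - i = (s - i) + n by omega, hLLI, ← hγ (s - i)]

end Series2

/-- The operator `S_1^{-1}` satisfies the twisted Leibniz rule
`(uv)S_1^{-1} = u·(v S_1^{-1}) + (u S_1^{-1})·v_0`, where `v_0` is the constant term
(coefficient of the empty word) of `v`.  Consequently, with `g` the noncommutative Lagrange
series, `h = 1 − g^{-1}` the series of prime parking functions, `γ = g S_1^{-1}` and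
`η = h S_1^{-1}`, one has `γ = g·η`, hence `η = g^{-1}·γ` and `η·(σ_1 − 1) = h`. -/
theorem prime_geode
    (g ginv γ η : PowerSeries NSym)
    (hg : ∀ m : ℕ, PowerSeries.coeff (R := NSym) m g =
      ∑ n ∈ Finset.range (m + 1), PowerSeries.coeff (R := NSym) m (S n * g ^ n))
    (hginv : g * ginv = 1 ∧ ginv * g = 1)
    (hγ : ∀ n : ℕ, PowerSeries.coeff (R := NSym) n γ = Sinv 1 (PowerSeries.coeff (R := NSym) (n + 1) g))
    (hη : ∀ n : ℕ, PowerSeries.coeff (R := NSym) n η =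
      Sinv 1 (PowerSeries.coeff (R := NSym) (n + 1) (1 - ginv))) :
    (∀ u v : NSym,
      Sinv 1 (u * v) = u * Sinv 1 v + ((toMA v).coeff (1 : FreeMonoid ℕ)) • Sinv 1 u) ∧
    γ = g * η ∧ η = ginv * γ ∧ η * (sigma1 - 1) = 1 - ginv := by
  obtain ⟨h1, h2⟩ := hginv
  have heta : η = ginv * γ := by
    ext s
    rw [hη s]
    have hk := eta_key hg h2 hγ s 1 le_rfl
    rw [← hk]
  have hgamma : γ = g * η := by
    rw [heta, ← mul_assoc, h1, one_mul]
  refine ⟨Sinv_leibniz 1, hgamma, heta, ?_⟩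
  ext m
  rcases Nat.eq_zero_or_pos m with rfl | hm
  · have hσ : constantCoeff (R := NSym) sigma1 = 1 := by
      rw [← coeff_zero_eq_constantCoeff_apply]
      unfold sigma1
      rw [coeff_mk, if_pos rfl]
    have hginv0 : constantCoeff (R := NSym) ginv = 1 := by
      rw [← coeff_zero_eq_constantCoeff_apply, ginv_zero hg h2]
    have e1 : coeff (R := NSym) 0 (η * (sigma1 - 1)) =
        constantCoeff (R := NSym) η * (constantCoeff (R := NSym) sigma1 - 1) := by
      rw [coeff_zero_eq_constantCoeff_apply, map_mul, map_sub, map_one]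
    have e2 : coeff (R := NSym) 0 (1 - ginv) = 1 - constantCoeff (R := NSym) ginv := by
      rw [coeff_zero_eq_constantCoeff_apply, map_sub, map_one]
    rw [e1, e2, hσ, hginv0, sub_self, mul_zero]
  · set x := coeff (R := NSym) m (1 - ginv) with hxdef
    have hx : Hgr m x := by
      have : x = -(coeff (R := NSym) m ginv) := by
        rw [hxdef, map_sub, coeff_one, if_neg (by omega), zero_sub]
      rw [this]
      exact Hgr_neg (Hgr_ginv hg h2 m)
    have L1 : coeff (R := NSym) m (η * (sigma1 - 1)) =
        ∑ i ∈ Finset.range (m + 1), coeff (R := NSym) i η * coeff (R := NSym) (m - i) (sigma1 - 1) := by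
      rw [coeff_mul, Finset.Nat.sum_antidiagonal_eq_sum_range_succ_mk]
    rw [L1, Finset.sum_range_succ, Nat.sub_self]
    have hσ0 : coeff (R := NSym) 0 (sigma1 - 1) = 0 := by
      rw [map_sub, coeff_one, if_pos rfl]
      unfold sigma1
      rw [coeff_mk, if_pos rfl, sub_self]
    rw [hσ0, mul_zero, add_zero]
    have L2 : ∀ i ∈ Finset.range m,
        coeff (R := NSym) i η * coeff (R := NSym) (m - i) (sigma1 - 1) =
        Sinv (m - i) x * FreeAlgebra.ι ℚ (m - i) := by
      intro i hi
      rw [Finset.mem_range] at hi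
      have hσi : coeff (R := NSym) (m - i) (sigma1 - 1) = FreeAlgebra.ι ℚ (m - i) := by
        rw [map_sub, coeff_one, if_neg (by omega), sub_zero]
        unfold sigma1
        rw [coeff_mk, if_neg (by omega)]
      have hηi : coeff (R := NSym) i η = Sinv (m - i) x := by
        rw [heta]
        have hk := eta_key hg h2 hγ i (m - i) (by omega)
        rw [show i + (m - i) = m by omega] at hk
        rw [← hk, hxdef]
      rw [hσi, hηi]
    rw [Finset.sum_congr rfl L2]
    have L3 : ∑ i ∈ Finset.range m, Sinv (m - i) x * FreeAlgebra.ι ℚ (m - i) =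
        ∑ n ∈ Finset.Icc 1 m, Sinv n x * FreeAlgebra.ι ℚ n := by
      refine Finset.sum_bij' (fun i _ => m - i) (fun n _ => m - n) ?_ ?_ ?_ ?_ ?_
      · intro i hi
        rw [Finset.mem_range] at hi
        show m - i ∈ Finset.Icc 1 m
        rw [Finset.mem_Icc]
        omega
      · intro n hn
        rw [Finset.mem_Icc] at hn
        show m - n ∈ Finset.range m
        rw [Finset.mem_range]
        omega
      · intro i hi
        rw [Finset.mem_range] at hi
        show m - (m - i) = i
        omega
      · intro n hn
        rw [Finset.mem_Icc] at hn
        show m - (m - n) = n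
        omega
      · intro i hi
        rfl
    rw [L3]
    exact resolution m hm x hx

end
end

section
/- For the hierarchy of k-Lagrange series defined by g^{(k)} = ∑_{n≥0} g_n^{(k−1)} (g^{(k)})^n (where g_n^{(k−1)} is the degree-n component of g^{(k−1)}), the series g^{(k)} − 1 is left-divisible by g^{(k−1)} − 1, and the quotient has nonnegative integer coefficients in the basis of words in the S_i. -/
noncomputable section

open PowerSeries Finset

/-- The subsemiring of `ℚ` of natural numbers. -/
def NN : Subsemiring ℚ := (Nat.castRingHom ℚ).rangeS

/-- `x` has nonnegative integer coefficients on the basis of words. -/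
def WNat (x : NSym) : Prop := ∀ w : FreeMonoid ℕ, (toMA x).coeff w ∈ NN

lemma pnat_zero : WNat 0 := by
  intro w; rw [map_zero]; simpa using zero_mem NN

lemma pnat_one : WNat 1 := by
  classical
  intro w
  rw [map_one, MonoidAlgebra.one_def, MonoidAlgebra.coeff_single, Finsupp.single_apply]
  split
  · exact ⟨1, by simp⟩
  · exact zero_mem NN

lemma pnat_iota (n : ℕ) : WNat (FreeAlgebra.ι ℚ n) := by
  classical
  intro w
  have h : toMA (FreeAlgebra.ι ℚ n) = MonoidAlgebra.single (FreeMonoid.of n) 1 := by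
    simp [toMA, FreeAlgebra.equivMonoidAlgebraFreeMonoid]
  rw [h, MonoidAlgebra.coeff_single, Finsupp.single_apply]
  split
  · exact ⟨1, by simp⟩
  · exact zero_mem NN

lemma pnat_add {x y : NSym} (hx : WNat x) (hy : WNat y) : WNat (x + y) := by
  intro w
  rw [map_add, MonoidAlgebra.coeff_add, Finsupp.add_apply]
  exact add_mem (hx w) (hy w)

lemma pnat_mul {x y : NSym} (hx : WNat x) (hy : WNat y) : WNat (x * y) := by
  classical
  intro w
  rw [map_mul, MonoidAlgebra.coeff_mul, Finsupp.sum]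
  refine sum_mem fun a₁ _ => ?_
  rw [Finsupp.sum]
  refine sum_mem fun a₂ _ => ?_
  split
  · exact mul_mem (hx a₁) (hy a₂)
  · exact zero_mem NN

lemma pnat_sum {α : Type*} {s : Finset α} {f : α → NSym} (h : ∀ i ∈ s, WNat (f i)) :
    WNat (∑ i ∈ s, f i) := by
  classical
  induction s using Finset.induction_on with
  | empty => simpa using pnat_zero
  | insert _ _ hni ih =>
    rw [Finset.sum_insert hni]
    exact pnat_add (h _ (Finset.mem_insert_self _ _))
      (ih fun i hi => h i (Finset.mem_insert_of_mem hi))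

lemma coeff_mon_mul (m n : ℕ) (x : NSym) (y : PowerSeries NSym) :
    PowerSeries.coeff m (PowerSeries.monomial (R := NSym) n x * y) =
      if n ≤ m then x * PowerSeries.coeff (m - n) y else 0 := by
  rw [PowerSeries.coeff_mul]
  split
  · next h =>
    rw [Finset.sum_eq_single_of_mem (n, m - n)
      (by rw [HasAntidiagonal.mem_antidiagonal]; omega)]
    · rw [PowerSeries.coeff_monomial, if_pos rfl]
    · rintro ⟨i, j⟩ hij hne
      rw [HasAntidiagonal.mem_antidiagonal] at hij
      rw [PowerSeries.coeff_monomial, if_neg, zero_mul]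
      rintro rfl
      exact hne (by simp; omega)
  · next h =>
    refine Finset.sum_eq_zero fun ⟨i, j⟩ hij => ?_
    rw [HasAntidiagonal.mem_antidiagonal] at hij
    rw [PowerSeries.coeff_monomial, if_neg (by omega), zero_mul]

lemma coeff_pow_lo {A : PowerSeries NSym} (hA0 : PowerSeries.constantCoeff A = 0) :
    ∀ l i, i < l → PowerSeries.coeff i (A ^ l) = 0 := by
  intro l
  induction l with
  | zero => omega
  | succ l ih =>
    intro i hi
    rw [pow_succ, PowerSeries.coeff_mul]
    refine Finset.sum_eq_zero fun ⟨p, q⟩ hpq => ?_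
    rw [HasAntidiagonal.mem_antidiagonal] at hpq
    rcases Nat.eq_zero_or_pos q with hq | hq
    · subst hq
      have : PowerSeries.coeff 0 A = 0 := by
        rwa [PowerSeries.coeff_zero_eq_constantCoeff]
      rw [this, mul_zero]
    · rw [ih p (by omega), zero_mul]

/-- If `f`'s coefficients are truncated sums of coefficients of `b n` (which have order
`≥ n`), then coefficients of `f * g` are the corresponding sums of coefficients of `b n * g`. -/
lemma coeff_mul_trunc (b : ℕ → PowerSeries NSym) (f g : PowerSeries NSym)
    (hb : ∀ n i, i < n → PowerSeries.coeff i (b n) = 0)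
    (hf : ∀ i, PowerSeries.coeff i f =
      ∑ n ∈ range (i + 1), PowerSeries.coeff i (b n)) (m : ℕ) :
    PowerSeries.coeff m (f * g) =
      ∑ n ∈ range (m + 1), PowerSeries.coeff m (b n * g) := by
  rw [PowerSeries.coeff_mul]
  have key : ∀ p ∈ antidiagonal m,
      PowerSeries.coeff p.1 f * PowerSeries.coeff p.2 g =
      ∑ n ∈ range (m + 1),
        PowerSeries.coeff p.1 (b n) * PowerSeries.coeff p.2 g := by
    rintro ⟨i, j⟩ hij
    rw [HasAntidiagonal.mem_antidiagonal] at hij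
    rw [hf i, ← Finset.sum_mul]
    congr 1
    refine Finset.sum_subset ?_ ?_
    · intro n hn
      rw [Finset.mem_range] at hn ⊢
      omega
    · intro n _ hn
      simp only [Finset.mem_range] at hn
      exact hb n i (by omega)
  rw [Finset.sum_congr rfl key, Finset.sum_comm]
  exact Finset.sum_congr rfl fun n _ => (PowerSeries.coeff_mul m (b n) g).symm

lemma pnat_coeff_mul {f g : PowerSeries NSym} {j : ℕ}
    (hf : ∀ i ≤ j, WNat (PowerSeries.coeff i f))
    (hg : ∀ i ≤ j, WNat (PowerSeries.coeff i g)) :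
    WNat (PowerSeries.coeff j (f * g)) := by
  rw [PowerSeries.coeff_mul]
  refine pnat_sum fun p hp => ?_
  rw [HasAntidiagonal.mem_antidiagonal] at hp
  exact pnat_mul (hf p.1 (by omega)) (hg p.2 (by omega))

lemma pnat_pow {f : PowerSeries NSym} {j : ℕ}
    (hf : ∀ i ≤ j, WNat (PowerSeries.coeff i f)) (e : ℕ) :
    ∀ i ≤ j, WNat (PowerSeries.coeff i (f ^ e)) := by
  induction e with
  | zero =>
    intro i _
    rw [pow_zero, PowerSeries.coeff_one]
    split
    · exact pnat_one
    · exact pnat_zero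
  | succ e ih =>
    intro i hij
    rw [pow_succ]
    exact pnat_coeff_mul (fun i' hi' => ih i' (le_trans hi' hij))
      (fun i' hi' => hf i' (le_trans hi' hij))

/-- In the hierarchy of `k`-Lagrange series, where `g⁽ᵏ⁻¹⁾` is the
`(k-1)`-Lagrange series (solving `g⁽ᵏ⁻¹⁾ = ∑_n S_n (g⁽ᵏ⁻¹⁾)^{(k-1)n}`) and `g⁽ᵏ⁾` is defined
by the recursion `g⁽ᵏ⁾ = ∑_{n≥0} g_n⁽ᵏ⁻¹⁾ (g⁽ᵏ⁾)^n` (with `g_n⁽ᵏ⁻¹⁾` the degree-`n` component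
of `g⁽ᵏ⁻¹⁾`), the series `g⁽ᵏ⁾ − 1` is left-divisible by `g⁽ᵏ⁻¹⁾ − 1` and the quotient has
nonnegative integer coefficients on the basis of words in the `S_i`. -/
theorem kLagrange_divisibility
    (k : ℕ) (hk : 1 ≤ k) (gprev gk : PowerSeries NSym)
    (hprev : ∀ m : ℕ, PowerSeries.coeff m gprev =
      ∑ n ∈ Finset.range (m + 1), PowerSeries.coeff m (S n * gprev ^ ((k - 1) * n)))
    (hrec : ∀ m : ℕ, PowerSeries.coeff m gk =
      ∑ n ∈ Finset.range (m + 1),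
        PowerSeries.coeff m
          (PowerSeries.monomial (R := NSym) n (PowerSeries.coeff n gprev) * gk ^ n)) :
    ∃ θ : PowerSeries NSym, gk - 1 = θ * (gprev - 1) ∧
      ∀ (n : ℕ) (I : List ℕ), ∃ c : ℕ, wcoeff (PowerSeries.coeff n θ) I = c := by
  classical
  set c : ℕ → NSym := fun n => PowerSeries.coeff n gprev with hc
  set a : ℕ → PowerSeries NSym :=
    fun n => PowerSeries.monomial (R := NSym) n (c n) * ∑ i ∈ range n, gk ^ i with ha
  set A : PowerSeries NSym :=
    PowerSeries.mk fun m => ∑ n ∈ range (m + 1), PowerSeries.coeff m (a n) with hA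
  set θ : PowerSeries NSym :=
    PowerSeries.mk fun m => ∑ n ∈ range (m + 1), PowerSeries.coeff m (A ^ n) with hθ
  -- basic coefficient facts
  have ha_lo : ∀ n i, i < n → PowerSeries.coeff i (a n) = 0 := by
    intro n i h
    rw [ha, coeff_mon_mul, if_neg (by omega)]
  have hAco : ∀ i, PowerSeries.coeff i A =
      ∑ n ∈ range (i + 1), PowerSeries.coeff i (a n) := fun i => by
    rw [hA, PowerSeries.coeff_mk]
  have hθco : ∀ i, PowerSeries.coeff i θ =
      ∑ n ∈ range (i + 1), PowerSeries.coeff i (A ^ n) := fun i => by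
    rw [hθ, PowerSeries.coeff_mk]
  have hA0 : PowerSeries.constantCoeff A = 0 := by
    rw [← PowerSeries.coeff_zero_eq_constantCoeff, hAco 0]
    have : a 0 = 0 := by rw [ha]; simp
    simp [this]
  have hApow : ∀ l i, i < l → PowerSeries.coeff i (A ^ l) = 0 := coeff_pow_lo hA0
  -- the telescoping identity for each summand
  have key : ∀ n : ℕ, PowerSeries.monomial (R := NSym) n (c n) * gk ^ n =
      a n * (gk - 1) + PowerSeries.monomial (R := NSym) n (c n) := by
    intro n
    rw [ha]
    rw [mul_assoc, geom_sum_mul, mul_sub, mul_one, sub_add_cancel]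
  -- Eq2 : gprev - 1 = (gk - 1) - A * (gk - 1)
  have Eq2 : gprev - 1 = (gk - 1) - A * (gk - 1) := by
    ext m
    have hmulA : PowerSeries.coeff m (A * (gk - 1)) =
        ∑ n ∈ range (m + 1), PowerSeries.coeff m (a n * (gk - 1)) :=
      coeff_mul_trunc a A (gk - 1) ha_lo hAco m
    have hgk : PowerSeries.coeff m gk =
        PowerSeries.coeff m (A * (gk - 1)) + PowerSeries.coeff m gprev := by
      rw [hrec m]
      have : ∀ n ∈ range (m + 1),
          PowerSeries.coeff m (PowerSeries.monomial (R := NSym) n (c n) * gk ^ n) =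
          PowerSeries.coeff m (a n * (gk - 1)) +
            PowerSeries.coeff m (PowerSeries.monomial (R := NSym) n (c n)) := by
        intro n _
        rw [key n, map_add]
      rw [Finset.sum_congr rfl this, Finset.sum_add_distrib, ← hmulA]
      congr 1
      have : ∀ n ∈ range (m + 1),
          PowerSeries.coeff m (PowerSeries.monomial (R := NSym) n (c n)) =
          if m = n then c n else 0 := by
        intro n _
        rw [PowerSeries.coeff_monomial]
      rw [Finset.sum_congr rfl this, Finset.sum_ite_eq,
        if_pos (Finset.self_mem_range_succ m)]
    simp only [map_sub]
    rw [hgk]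
    abel
  -- Eq3 : θ * A = θ - 1
  have Eq3 : θ * A = θ - 1 := by
    ext m
    have h1 : PowerSeries.coeff m (θ * A) =
        ∑ n ∈ range (m + 1), PowerSeries.coeff m (A ^ n * A) :=
      coeff_mul_trunc (fun n => A ^ n) θ A (fun n i h => hApow n i h) hθco m
    have h2 : ∀ n, A ^ n * A = A ^ (n + 1) := fun n => (pow_succ A n).symm
    have e2 := Finset.sum_range_succ' (fun n => PowerSeries.coeff m (A ^ n)) (m + 1)
    have e1 := Finset.sum_range_succ (fun n => PowerSeries.coeff m (A ^ n)) (m + 1)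
    have hz : PowerSeries.coeff m (A ^ (m + 1)) = 0 := hApow (m + 1) m (by omega)
    rw [h1]
    simp only [h2]
    have : ∑ n ∈ range (m + 1), PowerSeries.coeff m (A ^ (n + 1)) =
        (∑ n ∈ range (m + 1), PowerSeries.coeff m (A ^ n)) -
          PowerSeries.coeff m (A ^ 0) := by
      rw [eq_sub_iff_add_eq, ← e2, e1, hz, add_zero]
    rw [this, map_sub, hθco m, pow_zero]
  refine ⟨θ, ?_, ?_⟩
  · rw [Eq2]
    have : θ * ((gk - 1) - A * (gk - 1)) = θ * (gk - 1) - θ * A * (gk - 1) := by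
      rw [mul_sub, mul_assoc]
    rw [this, Eq3]
    noncomm_ring
  · -- positivity
    have Qprev : ∀ m, WNat (PowerSeries.coeff m gprev) := by
      intro m
      induction m using Nat.strong_induction_on with
      | _ m IH =>
        rw [hprev m]
        refine pnat_sum fun n _ => ?_
        by_cases hn0 : n = 0
        · subst hn0
          have : S 0 * gprev ^ ((k - 1) * 0) = 1 := by simp [S]
          rw [this, PowerSeries.coeff_one]
          split
          · exact pnat_one
          · exact pnat_zero
        · rw [S, if_neg hn0, coeff_mon_mul]
          split
          · next hnm =>
            exact pnat_mul (pnat_iota n)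
              (pnat_pow (fun i hi => IH i (by omega)) _ (m - n) le_rfl)
          · exact pnat_zero
    have Qk : ∀ m, WNat (PowerSeries.coeff m gk) := by
      intro m
      induction m using Nat.strong_induction_on with
      | _ m IH =>
        rw [hrec m]
        refine pnat_sum fun n _ => ?_
        rw [coeff_mon_mul]
        split
        · next hnm =>
          refine pnat_mul (Qprev n) ?_
          by_cases hn0 : n = 0
          · subst hn0
            rw [pow_zero, PowerSeries.coeff_one]
            split
            · exact pnat_one
            · exact pnat_zero
          · exact pnat_pow (fun i hi => IH i (by omega)) _ (m - n) le_rfl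
        · exact pnat_zero
    have Qa : ∀ n m, WNat (PowerSeries.coeff m (a n)) := by
      intro n m
      rw [ha, coeff_mon_mul]
      split
      · refine pnat_mul (Qprev n) ?_
        rw [map_sum]
        exact pnat_sum fun i _ => pnat_pow (fun i' _ => Qk i') _ (m - n) le_rfl
      · exact pnat_zero
    have QA : ∀ m, WNat (PowerSeries.coeff m A) := by
      intro m
      rw [hAco]
      exact pnat_sum fun n _ => Qa n m
    intro n I
    have Qθ : WNat (PowerSeries.coeff n θ) := by
      rw [hθco]
      exact pnat_sum fun l _ => pnat_pow (fun i _ => QA i) _ n le_rfl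
    obtain ⟨cc, hcc⟩ := Qθ (FreeMonoid.ofList I)
    exact ⟨cc, by rw [wcoeff, ← hcc]; simp⟩

end
end
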